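/- arXiv:2004.14187 — 3 statements merged into one kernel-verified Lean document; each statement's English description precedes it below -/
import Mathlib

section
/- The functional J_Ψ is strictly convex on Q_Ψ^+: for any Q_1, Q_2 ∈ Q_Ψ^+ with Q_1 ≠ Q_2 (as elements of 𝒫_{m,n}) and any t ∈ (0,1), one has tQ_1 + (1−t)Q_2 ∈ Q_Ψ^+ and J_Ψ(tQ_1 + (1−t)Q_2) < t J_Ψ(Q_1) + (1−t) J_Ψ(Q_2). -/
/-!
`logdet` is strictly concave on positive definite matrices: writing `A = S * S` and
`B = S * M * S`, the inequality `a logdet A + b logdet B < logdet (a A + b B)` reduces to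
`b logdet M < logdet (a + b M)`, i.e. to the strict concavity of `log` on the eigenvalues of `M`.
Since `Q ↦ Ψ⁻¹ + Q(θ)` is affine and the trace term is linear, the integrand of `J_Ψ` is convex
in `Q` at every `θ`, and strictly convex wherever `Q₁(θ) ≠ Q₂(θ)`. Such a `θ` exists because the
coefficients of a pseudo-polynomial are its Fourier coefficients. The integrands are continuous,
so the strict inequality at one point survives integration, and `h_σ^∞`, a sum of maxima of
absolute values of coefficients, is convex.
-/

open MeasureTheory Matrix Filter
open scoped Real ComplexOrder

/-- Embed a real matrix into the complex matrices. -/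
noncomputable def cm {m : ℕ} (A : Matrix (Fin m) (Fin m) ℝ) : Matrix (Fin m) (Fin m) ℂ :=
  A.map (fun x => (x : ℂ))

/-- Evaluation of the matrix pseudo-polynomial `Q(θ) = ∑_{k=-n}^n C_k e^{i k θ}`. -/
noncomputable def ppEval {m : ℕ} (n : ℕ) (C : ℤ → Matrix (Fin m) (Fin m) ℝ) (θ : ℝ) :
    Matrix (Fin m) (Fin m) ℂ :=
  ∑ k ∈ Finset.Icc (-(n : ℤ)) (n : ℤ), Complex.exp (Complex.I * (k : ℂ) * (θ : ℂ)) • cm (C k)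

/-- The truncated periodogram `Φ̂_n(θ) = ∑_{k=-n}^n R_k e^{-i k θ}`. -/
noncomputable def pgram {m : ℕ} (n : ℕ) (R : ℤ → Matrix (Fin m) (Fin m) ℝ) (θ : ℝ) :
    Matrix (Fin m) (Fin m) ℂ :=
  ∑ k ∈ Finset.Icc (-(n : ℤ)) (n : ℤ), Complex.exp (-(Complex.I * (k : ℂ) * (θ : ℂ))) • cm (R k)

/-- Membership in the space `𝒫_{m,n}` of matrix pseudo-polynomials, described through the
coefficients: symmetry `C_{-k} = C_kᵀ` and vanishing of the coefficients of index `|k| > n`. -/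
def IsPP (m n : ℕ) (C : ℤ → Matrix (Fin m) (Fin m) ℝ) : Prop :=
  (∀ k : ℤ, C (-k) = (C k)ᵀ) ∧ ∀ k : ℤ, (n : ℤ) < |k| → C k = 0

/-- `log det` of a (Hermitian positive definite) complex matrix: the real logarithm of the
real part of the determinant. -/
noncomputable def logdet {m : ℕ} (A : Matrix (Fin m) (Fin m) ℂ) : ℝ :=
  Real.log A.det.re

/-- The group-sparsity functional `h_σ^∞`. -/
noncomputable def hSig {m : ℕ} (n : ℕ) (Ωσ : Finset (Fin m × Fin m))
    (C : ℤ → Matrix (Fin m) (Fin m) ℝ) : ℝ :=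
  ∑ p ∈ Finset.univ.filter (fun p : Fin m × Fin m => p ∉ Ωσ ∧ p.1 < p.2),
    max |C 0 p.1 p.2|
      (max (⨆ j ∈ Finset.Icc (1 : ℤ) (n : ℤ), |C j p.1 p.2|)
           (⨆ j ∈ Finset.Icc (1 : ℤ) (n : ℤ), |C j p.2 p.1|))

/-- The regularized objective functional `J_Ψ`. -/
noncomputable def Jfun {m : ℕ} (n : ℕ) (Ψ : ℝ → Matrix (Fin m) (Fin m) ℂ)
    (R : ℤ → Matrix (Fin m) (Fin m) ℝ) (Ωσ : Finset (Fin m × Fin m)) (lam : ℝ)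
    (C : ℤ → Matrix (Fin m) (Fin m) ℝ) : ℝ :=
  (∫ θ in (-π)..π, ((ppEval n C θ * pgram n R θ).trace.re
      - logdet ((Ψ θ)⁻¹ + ppEval n C θ))) / (2 * π) + lam * hSig n Ωσ C

/-- The approximating functional `J_Ψ^{n'}`, where `Ψ⁻¹ + Q` is replaced by
`Ψ⁻¹ + Q + (1/n') I`. -/
noncomputable def Jreg {m : ℕ} (n : ℕ) (Ψ : ℝ → Matrix (Fin m) (Fin m) ℂ)
    (R : ℤ → Matrix (Fin m) (Fin m) ℝ) (Ωσ : Finset (Fin m × Fin m)) (lam : ℝ)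
    (nn : ℕ) (C : ℤ → Matrix (Fin m) (Fin m) ℝ) : ℝ :=
  (∫ θ in (-π)..π, ((ppEval n C θ * pgram n R θ).trace.re
      - logdet ((Ψ θ)⁻¹ + ppEval n C θ + (((nn : ℝ)⁻¹ : ℂ)) • 1))) / (2 * π)
    + lam * hSig n Ωσ C

/-- The extended functional `J_Ψ^∞`, the (increasing) limit of `J_Ψ^{n'}` as `n' → ∞`,
with values in `ℝ ∪ {±∞}`. -/
noncomputable def Jinf {m : ℕ} (n : ℕ) (Ψ : ℝ → Matrix (Fin m) (Fin m) ℂ)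
    (R : ℤ → Matrix (Fin m) (Fin m) ℝ) (Ωσ : Finset (Fin m × Fin m)) (lam : ℝ)
    (C : ℤ → Matrix (Fin m) (Fin m) ℝ) : EReal :=
  ⨆ nn : ℕ, ((Jreg n Ψ R Ωσ lam (nn + 1) C : ℝ) : EReal)

namespace Matrix

lemma convex_setOf_posDef {ι : Type*} : Convex ℝ {A : Matrix ι ι ℂ | A.PosDef} := by
  intro A hA B hB a b ha hb hab
  rcases ha.lt_or_eq with ha | rfl
  · exact (hA.smul ha).add_posSemidef (hB.posSemidef.smul hb)
  · simpa [show b = 1 by linarith] using hB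

variable {ι 𝕜 : Type*} [Fintype ι] [DecidableEq ι] [RCLike 𝕜]

lemma PosDef.det_eq_ofReal_re {A : Matrix ι ι ℂ} (hA : A.PosDef) : A.det = (A.det.re : ℂ) :=
  Complex.ext rfl (Complex.lt_def.mp hA.det_pos).2.symm

lemma PosDef.re_det_pos {A : Matrix ι ι ℂ} (hA : A.PosDef) : 0 < A.det.re :=
  (Complex.lt_def.mp hA.det_pos).1

lemma IsHermitian.det_cfc {A : Matrix ι ι 𝕜} (hA : A.IsHermitian) (f : ℝ → ℝ) :
    (cfc f A).det = ∏ i, (f (hA.eigenvalues i) : 𝕜) := by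
  simp [hA.cfc_eq, IsHermitian.cfc, -Unitary.conjStarAlgAut_apply]

open scoped MatrixOrder in
lemma PosDef.exists_eq_sqrt_mul_mul_sqrt {A B : Matrix ι ι 𝕜} (hA : A.PosDef) (hB : B.PosDef) :
    ∃ S M : Matrix ι ι 𝕜, S * S = A ∧ M.PosDef ∧ B = S * M * S := by
  set S := CFC.sqrt A
  have hSS : S * S = A := CFC.sqrt_mul_sqrt_self A hA.posSemidef.nonneg
  have hS : IsUnit S.det := by
    have : IsUnit (S * S).det := hSS ▸ hA.det_pos.ne'.isUnit
    exact (IsUnit.mul_iff.mp (det_mul S S ▸ this)).1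
  have hSH : S⁻¹ᴴ = S⁻¹ := by
    rw [conjTranspose_nonsing_inv, (CFC.sqrt_nonneg A).posSemidef.isHermitian.eq]
  refine ⟨S, S⁻¹ * B * S⁻¹, hSS, ?_, ?_⟩
  · have := hB.conjTranspose_mul_mul_same
      (mulVec_injective_of_isUnit ((isUnit_iff_isUnit_det _).mpr (isUnit_nonsing_inv_det S hS)))
    rwa [hSH] at this
  · rw [← mul_assoc, ← mul_assoc, mul_nonsing_inv _ hS, one_mul, mul_assoc,
      nonsing_inv_mul _ hS, mul_one]

end Matrix

section LogDet

variable {m : ℕ} {A B X : Matrix (Fin m) (Fin m) ℂ}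

lemma logdet_eq_add_of_det_eq_mul (hA : A.PosDef) (hB : B.PosDef) (h : X.det = A.det * B.det) :
    logdet X = logdet A + logdet B := by
  rw [logdet, h, hA.det_eq_ofReal_re, hB.det_eq_ofReal_re, ← Complex.ofReal_mul,
    Complex.ofReal_re, Real.log_mul hA.re_det_pos.ne' hB.re_det_pos.ne', logdet, logdet]

lemma logdet_cfc (hA : A.IsHermitian) {f : ℝ → ℝ} (hf : ∀ i, 0 < f (hA.eigenvalues i)) :
    logdet (cfc f A) = ∑ i, Real.log (f (hA.eigenvalues i)) := by
  have hdet : (cfc f A).det.re = ∏ i, f (hA.eigenvalues i) := by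
    rw [hA.det_cfc]
    norm_cast
  rw [logdet, hdet, Real.log_prod fun i _ => (hf i).ne']

lemma one_sub_mul_logdet_lt (hA : A.PosDef) (hA_ne_one : A ≠ 1) {t : ℝ} (ht0 : 0 < t)
    (ht1 : t < 1) :
    (1 - t) * logdet A < logdet (t • 1 + (1 - t) • A) := by
  have hsa : IsSelfAdjoint A := hA.isHermitian
  set μ := hA.isHermitian.eigenvalues
  have hμ : ∀ i, 0 < μ i := hA.eigenvalues_pos
  have hlogA : logdet A = ∑ i, Real.log (μ i) := by
    have h := logdet_cfc hA.isHermitian (f := id) hμ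
    rwa [cfc_id ℝ A] at h
  have hcomb : t • 1 + (1 - t) • A = cfc (fun x => t + (1 - t) * x) A := by
    rw [cfc_add .., cfc_const t A, cfc_const_mul_id .., Algebra.algebraMap_eq_smul_one]
  obtain ⟨i₀, hi₀⟩ : ∃ i, μ i ≠ 1 := by
    by_contra! h
    refine hA_ne_one ((cfc_id' ℝ A).symm.trans
      ((cfc_congr fun x hx => ?_).trans (cfc_const_one ℝ A)))
    obtain ⟨i, rfl⟩ := hA.isHermitian.spectrum_real_eq_range_eigenvalues ▸ hx
    exact h i
  have hle : ∀ i, (1 - t) * Real.log (μ i) ≤ Real.log (t + (1 - t) * μ i) := fun i => by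
    simpa using strictConcaveOn_log_Ioi.concaveOn.2 (Set.mem_Ioi.mpr one_pos)
      (Set.mem_Ioi.mpr (hμ i)) ht0.le (by linarith) (by ring)
  have hlt : (1 - t) * Real.log (μ i₀) < Real.log (t + (1 - t) * μ i₀) := by
    simpa using strictConcaveOn_log_Ioi.2 (Set.mem_Ioi.mpr one_pos) (Set.mem_Ioi.mpr (hμ i₀))
      (Ne.symm hi₀) ht0 (by linarith) (by ring)
  rw [hcomb, logdet_cfc hA.isHermitian (fun i => by have := hμ i; nlinarith), hlogA, Finset.mul_sum]
  exact Finset.sum_lt_sum (fun i _ => hle i) ⟨i₀, Finset.mem_univ _, hlt⟩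

theorem strictConcaveOn_logdet :
    StrictConcaveOn ℝ {A : Matrix (Fin m) (Fin m) ℂ | A.PosDef} logdet := by
  refine ⟨Matrix.convex_setOf_posDef, fun A hA B hB hAB a b ha hb hab => ?_⟩
  obtain ⟨S, M, rfl, hM, rfl⟩ := Matrix.PosDef.exists_eq_sqrt_mul_mul_sqrt hA hB
  have hM1 : M ≠ 1 := by rintro rfl; simp at hAB
  obtain rfl : b = 1 - a := by linarith
  have hcomb : a • (S * S) + (1 - a) • (S * M * S) = S * (a • 1 + (1 - a) • M) * S := by
    simp only [Matrix.mul_add, Matrix.add_mul, Matrix.mul_smul, Matrix.smul_mul, Matrix.mul_one]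
  have hN : (a • 1 + (1 - a) • M).PosDef :=
    (Matrix.PosDef.one.smul ha).add (hM.smul hb)
  have hdet : ∀ N : Matrix (Fin m) (Fin m) ℂ, (S * N * S).det = (S * S).det * N.det := fun N => by
    simp only [Matrix.det_mul]; ring
  rw [smul_eq_mul, smul_eq_mul, hcomb, logdet_eq_add_of_det_eq_mul hA hM (hdet M),
    logdet_eq_add_of_det_eq_mul hA hN (hdet _)]
  linarith [one_sub_mul_logdet_lt hM hM1 ha (by linarith : a < 1)]

end LogDet

section PseudoPolynomial

variable {m : ℕ} (n : ℕ)

lemma ppEval_add (C D : ℤ → Matrix (Fin m) (Fin m) ℝ) (θ : ℝ) :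
    ppEval n (C + D) θ = ppEval n C θ + ppEval n D θ := by
  simp only [ppEval, ← Finset.sum_add_distrib, ← smul_add]
  congr! 2
  ext; simp [cm]

lemma ppEval_smul (t : ℝ) (C : ℤ → Matrix (Fin m) (Fin m) ℝ) (θ : ℝ) :
    ppEval n (t • C) θ = t • ppEval n C θ := by
  simp only [ppEval, Finset.smul_sum, smul_comm t]
  congr! 2
  ext; simp [cm]

lemma continuous_ppEval (C : ℤ → Matrix (Fin m) (Fin m) ℝ) : Continuous (ppEval n C) := by
  unfold ppEval
  fun_prop

lemma continuous_pgram (R : ℤ → Matrix (Fin m) (Fin m) ℝ) : Continuous (pgram n R) := by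
  unfold pgram
  fun_prop

lemma add_ppEval_smul_add_smul (A : Matrix (Fin m) (Fin m) ℂ) (C₁ C₂ : ℤ → Matrix (Fin m) (Fin m) ℝ)
    {a b : ℝ} (hab : a + b = 1) (θ : ℝ) :
    A + ppEval n (a • C₁ + b • C₂) θ = a • (A + ppEval n C₁ θ) + b • (A + ppEval n C₂ θ) := by
  obtain rfl : b = 1 - a := by linarith
  rw [ppEval_add, ppEval_smul, ppEval_smul]
  module

lemma integral_exp_I_mul_int (k : ℤ) :
    ∫ θ in (-π)..π, Complex.exp (Complex.I * k * θ) = if k = 0 then (2 * π : ℂ) else 0 := by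
  split_ifs with hk
  · simp only [hk, Int.cast_zero, mul_zero, zero_mul, Complex.exp_zero,
      intervalIntegral.integral_const, sub_neg_eq_add, Complex.real_smul, Complex.ofReal_add,
      mul_one]
    ring
  · have hc : Complex.I * k ≠ 0 := mul_ne_zero Complex.I_ne_zero (Int.cast_ne_zero.mpr hk)
    -- `exp (I k θ)` is `2π`-periodic, so the antiderivative takes equal values at `±π`
    have hper : Complex.exp (Complex.I * k * π) = Complex.exp (Complex.I * k * ((-π : ℝ) : ℂ)) := by
      rw [show Complex.I * k * π = Complex.I * k * ((-π : ℝ) : ℂ) + k * (2 * π * Complex.I) by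
        push_cast; ring, Complex.exp_add, Complex.exp_int_mul_two_pi_mul_I, mul_one]
    rw [integral_exp_mul_complex hc, hper, sub_self, zero_div]

lemma integral_exp_mul_ppEval_apply (C : ℤ → Matrix (Fin m) (Fin m) ℝ) {l : ℤ}
    (hl : l ∈ Finset.Icc (-(n : ℤ)) n) (i j : Fin m) :
    ∫ θ in (-π)..π, Complex.exp (-(Complex.I * l * θ)) * ppEval n C θ i j = 2 * π * C l i j := by
  have hterm : ∀ θ : ℝ, Complex.exp (-(Complex.I * l * θ)) * ppEval n C θ i j
      = ∑ k ∈ Finset.Icc (-(n : ℤ)) n, Complex.exp (Complex.I * (k - l : ℤ) * θ) * C k i j := by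
    intro θ
    simp only [ppEval, Matrix.sum_apply, Matrix.smul_apply, Finset.mul_sum, cm, Matrix.map_apply,
      smul_eq_mul, ← mul_assoc, ← Complex.exp_add]
    congr! 3
    push_cast
    ring
  simp_rw [hterm]
  rw [intervalIntegral.integral_finsetSum
      fun k _ => (by fun_prop : Continuous _).intervalIntegrable _ _,
    Finset.sum_eq_single_of_mem l hl fun k _ hk => ?_]
  · rw [intervalIntegral.integral_mul_const, sub_self, integral_exp_I_mul_int, if_pos rfl]
  · rw [intervalIntegral.integral_mul_const, integral_exp_I_mul_int,
      if_neg (sub_ne_zero.mpr hk), zero_mul]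

lemma eq_of_eqOn_ppEval {C₁ C₂ : ℤ → Matrix (Fin m) (Fin m) ℝ}
    (h₁ : ∀ k : ℤ, (n : ℤ) < |k| → C₁ k = 0) (h₂ : ∀ k : ℤ, (n : ℤ) < |k| → C₂ k = 0)
    (h : Set.EqOn (ppEval n C₁) (ppEval n C₂) (Set.Icc (-π) π)) : C₁ = C₂ := by
  funext l
  by_cases hl : l ∈ Finset.Icc (-(n : ℤ)) n
  · ext i j
    have hint : ∫ θ in (-π)..π, Complex.exp (-(Complex.I * l * θ)) * ppEval n C₁ θ i j
        = ∫ θ in (-π)..π, Complex.exp (-(Complex.I * l * θ)) * ppEval n C₂ θ i j :=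
      intervalIntegral.integral_congr fun θ hθ => by
        rw [Set.uIcc_of_le (by linarith [Real.pi_pos])] at hθ
        simp only [h hθ]
    rw [integral_exp_mul_ppEval_apply n C₁ hl, integral_exp_mul_ppEval_apply n C₂ hl] at hint
    exact_mod_cast mul_left_cancel₀ (by simp [Real.pi_ne_zero]) hint
  · have hl' : (n : ℤ) < |l| := by
      rw [Finset.mem_Icc, ← abs_le] at hl
      exact not_le.mp hl
    rw [h₁ l hl', h₂ l hl']

end PseudoPolynomial

lemma ContinuousOn.matrix_inv {X K ι : Type*} [TopologicalSpace X] [Field K] [TopologicalSpace K]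
    [IsTopologicalDivisionRing K] [Fintype ι] [DecidableEq ι]
    {f : X → Matrix ι ι K} {s : Set X} (hf : ContinuousOn f s) (h : ∀ x ∈ s, (f x).det ≠ 0) :
    ContinuousOn (fun x => (f x)⁻¹) s := fun x hx =>
  (continuousAt_matrix_inv _ (by rw [Ring.inverse_eq_inv']; exact continuousAt_inv₀ (h x hx))
    ).comp_continuousWithinAt (hf x hx)

section Integrand

variable {m : ℕ} (n : ℕ) (Ψ : ℝ → Matrix (Fin m) (Fin m) ℂ) (R : ℤ → Matrix (Fin m) (Fin m) ℝ)

noncomputable def Jintegrand (C : ℤ → Matrix (Fin m) (Fin m) ℝ) (θ : ℝ) : ℝ :=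
  (ppEval n C θ * pgram n R θ).trace.re - logdet ((Ψ θ)⁻¹ + ppEval n C θ)

lemma Jintegrand_smul_add_smul (C₁ C₂ : ℤ → Matrix (Fin m) (Fin m) ℝ) {a b : ℝ}
    (hab : a + b = 1) (θ : ℝ) :
    Jintegrand n Ψ R (a • C₁ + b • C₂) θ
      = a * Jintegrand n Ψ R C₁ θ + b * Jintegrand n Ψ R C₂ θ
        + (a * logdet ((Ψ θ)⁻¹ + ppEval n C₁ θ) + b * logdet ((Ψ θ)⁻¹ + ppEval n C₂ θ)
          - logdet (a • ((Ψ θ)⁻¹ + ppEval n C₁ θ) + b • ((Ψ θ)⁻¹ + ppEval n C₂ θ))) := by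
  rw [Jintegrand, Jintegrand, Jintegrand, ← add_ppEval_smul_add_smul n _ C₁ C₂ hab, ppEval_add,
    ppEval_smul, ppEval_smul]
  simp only [Matrix.add_mul, Matrix.smul_mul, Matrix.trace_add, Matrix.trace_smul, Complex.add_re,
    Complex.real_smul, Complex.re_ofReal_mul]
  ring

lemma Jfun_eq (Ωσ : Finset (Fin m × Fin m)) (lam : ℝ) (C : ℤ → Matrix (Fin m) (Fin m) ℝ) :
    Jfun n Ψ R Ωσ lam C = (∫ θ in (-π)..π, Jintegrand n Ψ R C θ) / (2 * π) + lam * hSig n Ωσ C :=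
  rfl

variable {n Ψ}

lemma continuousOn_Jintegrand {s : Set ℝ} (hΨ : ContinuousOn Ψ s) (hΨdet : ∀ θ ∈ s, (Ψ θ).det ≠ 0)
    {C : ℤ → Matrix (Fin m) (Fin m) ℝ} (hC : ∀ θ ∈ s, ((Ψ θ)⁻¹ + ppEval n C θ).PosDef) :
    ContinuousOn (Jintegrand n Ψ R C) s := by
  have hA : ContinuousOn (fun θ => (Ψ θ)⁻¹ + ppEval n C θ) s :=
    (hΨ.matrix_inv hΨdet).add (continuous_ppEval n C).continuousOn
  have htr : Continuous fun θ => (ppEval n C θ * pgram n R θ).trace.re :=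
    Complex.continuous_re.comp
      ((continuous_ppEval n C).matrix_mul (continuous_pgram n R)).matrix_trace
  have hdet : ContinuousOn (fun θ => ((Ψ θ)⁻¹ + ppEval n C θ).det.re) s :=
    (Complex.continuous_re.comp continuous_id.matrix_det).comp_continuousOn hA
  exact htr.continuousOn.sub (hdet.log fun θ hθ => (hC θ hθ).re_det_pos.ne')

end Integrand

section Sparsity

variable {E ι : Type*} [AddCommGroup E] [Module ℝ E]

lemma le_biSup_of_mem_finset (s : Finset ι) (f : ι → ℝ) {j : ι} (hj : j ∈ s) :
    f j ≤ ⨆ k ∈ s, f k :=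
  le_ciSup₂ (f := fun k (_ : k ∈ s) => f k) ((s.finite_toSet.image f).bddAbove.mono
    (by rintro _ ⟨_, ⟨k, rfl⟩, ⟨hk, rfl⟩⟩; exact ⟨k, hk, rfl⟩)) j hj

lemma ConvexOn.biSup {S : Set E} (hS : Convex ℝ S) (s : Finset ι) {g : ι → E → ℝ}
    (hg : ∀ j ∈ s, ConvexOn ℝ S (g j)) (hg₀ : ∀ j ∈ s, ∀ x ∈ S, 0 ≤ g j x) :
    ConvexOn ℝ S (fun x => ⨆ j ∈ s, g j x) := by
  have hsup₀ : ∀ x ∈ S, 0 ≤ ⨆ j ∈ s, g j x := fun x hx =>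
    Real.iSup_nonneg fun j => Real.iSup_nonneg fun hj => hg₀ j hj x hx
  refine ⟨hS, fun x hx y hy a b ha hb hab => ?_⟩
  have hrhs : 0 ≤ a • (⨆ j ∈ s, g j x) + b • ⨆ j ∈ s, g j y := by
    have := hsup₀ x hx; have := hsup₀ y hy; positivity
  refine Real.iSup_le (fun j => Real.iSup_le (fun hj => ?_) hrhs) hrhs
  calc g j (a • x + b • y) ≤ a • g j x + b • g j y := (hg j hj).2 hx hy ha hb hab
    _ ≤ a • (⨆ j ∈ s, g j x) + b • ⨆ j ∈ s, g j y := by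
      gcongr
      · exact le_biSup_of_mem_finset s (g · x) hj
      · exact le_biSup_of_mem_finset s (g · y) hj

variable {m : ℕ}

lemma convexOn_abs_apply (j : ℤ) (a b : Fin m) :
    ConvexOn ℝ Set.univ (fun C : ℤ → Matrix (Fin m) (Fin m) ℝ => |C j a b|) :=
  ⟨convex_univ, fun C₁ _ C₂ _ μ ν hμ hν _ => by
    simpa [abs_mul, abs_of_nonneg hμ, abs_of_nonneg hν] using
      abs_add_le (μ * C₁ j a b) (ν * C₂ j a b)⟩

lemma convexOn_hSig (n : ℕ) (Ωσ : Finset (Fin m × Fin m)) : ConvexOn ℝ Set.univ (hSig n Ωσ) := by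
  have hsup : ∀ a b : Fin m, ConvexOn ℝ Set.univ
      (fun C : ℤ → Matrix (Fin m) (Fin m) ℝ => ⨆ j ∈ Finset.Icc (1 : ℤ) n, |C j a b|) := fun a b =>
    .biSup convex_univ _ (fun j _ => convexOn_abs_apply j a b) fun _ _ _ _ => abs_nonneg _
  have hterm : ∀ p : Fin m × Fin m, ConvexOn ℝ Set.univ (fun C : ℤ → Matrix (Fin m) (Fin m) ℝ =>
      max |C 0 p.1 p.2| (max (⨆ j ∈ Finset.Icc (1 : ℤ) n, |C j p.1 p.2|)
        (⨆ j ∈ Finset.Icc (1 : ℤ) n, |C j p.2 p.1|))) := fun p =>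
    (convexOn_abs_apply 0 p.1 p.2).sup ((hsup p.1 p.2).sup (hsup p.2 p.1))
  refine ⟨convex_univ, fun C₁ _ C₂ _ μ ν hμ hν hμν => ?_⟩
  simp only [hSig, smul_eq_mul, Finset.mul_sum, ← Finset.sum_add_distrib]
  exact Finset.sum_le_sum fun p _ => (hterm p).2 trivial trivial hμ hν hμν

end Sparsity

section Convexity

variable {E : Type*} [AddCommGroup E] [Module ℝ E] {s : Set E}

lemma StrictConvexOn.div_const {f : E → ℝ} (hf : StrictConvexOn ℝ s f) {c : ℝ} (hc : 0 < c) :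
    StrictConvexOn ℝ s (fun x => f x / c) :=
  ⟨hf.1, fun x hx y hy hxy a b ha hb hab => by
    have := div_lt_div_of_pos_right (hf.2 hx hy hxy ha hb hab) hc
    simp only [smul_eq_mul] at this ⊢
    linarith [show (a * f x + b * f y) / c = a * (f x / c) + b * (f y / c) by ring]⟩

theorem strictConvexOn_intervalIntegral (hs : Convex ℝ s) {F : E → ℝ → ℝ} {α β : ℝ} (hαβ : α < β)
    (hcont : ∀ x ∈ s, ContinuousOn (F x) (Set.Icc α β))
    (hconv : ∀ θ ∈ Set.Icc α β, ConvexOn ℝ s (F · θ))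
    (hstrict : ∀ x ∈ s, ∀ y ∈ s, x ≠ y → ∃ θ ∈ Set.Icc α β, ∀ ⦃a b : ℝ⦄, 0 < a → 0 < b →
      a + b = 1 → F (a • x + b • y) θ < a * F x θ + b * F y θ) :
    StrictConvexOn ℝ s (fun x => ∫ θ in α..β, F x θ) := by
  refine ⟨hs, fun x hx y hy hxy a b ha hb hab => ?_⟩
  obtain ⟨θ₀, hθ₀, hlt⟩ := hstrict x hx y hy hxy
  have hint : ∀ z ∈ s, IntervalIntegrable (F z) volume α β := fun z hz =>
    (hcont z hz).intervalIntegrable_of_Icc hαβ.le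
  have hmono := intervalIntegral.integral_lt_integral_of_continuousOn_of_le_of_exists_lt hαβ
    (hcont _ (hs hx hy ha.le hb.le hab))
    (((hcont x hx).const_smul a).add ((hcont y hy).const_smul b))
    (fun θ hθ => (hconv θ (Set.Ioc_subset_Icc_self hθ)).2 hx hy ha.le hb.le hab)
    ⟨θ₀, hθ₀, hlt ha hb hab⟩
  simp only [Pi.add_apply, Pi.smul_apply, smul_eq_mul] at hmono
  rwa [intervalIntegral.integral_add ((hint x hx).const_mul a) ((hint y hy).const_mul b),
    intervalIntegral.integral_const_mul, intervalIntegral.integral_const_mul] at hmono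

end Convexity

section StrictConvexity

variable {m n : ℕ} {Ψ : ℝ → Matrix (Fin m) (Fin m) ℂ}

variable (n Ψ) in
/-- The set `Q_Ψ^+`, with pseudo-polynomials given by their coefficients. -/
def QPlus : Set (ℤ → Matrix (Fin m) (Fin m) ℝ) :=
  {C | IsPP m n C ∧ ∀ θ ∈ Set.Icc (-π) π, ((Ψ θ)⁻¹ + ppEval n C θ).PosDef}

lemma convex_setOf_isPP : Convex ℝ {C : ℤ → Matrix (Fin m) (Fin m) ℝ | IsPP m n C} :=
  fun _ h₁ _ h₂ _ _ _ _ _ =>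
    ⟨fun k => by simp [h₁.1 k, h₂.1 k], fun k hk => by simp [h₁.2 k hk, h₂.2 k hk]⟩

lemma convex_setOf_posDef_inv_add_ppEval (θ : ℝ) :
    Convex ℝ {C | ((Ψ θ)⁻¹ + ppEval n C θ).PosDef} := fun C₁ h₁ C₂ h₂ a b ha hb hab => by
  rw [Set.mem_ofPred_eq, add_ppEval_smul_add_smul n _ C₁ C₂ hab]
  exact Matrix.convex_setOf_posDef h₁ h₂ ha hb hab

lemma convex_QPlus : Convex ℝ (QPlus n Ψ) := fun _ h₁ _ h₂ _ _ ha hb hab =>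
  ⟨convex_setOf_isPP h₁.1 h₂.1 ha hb hab,
    fun θ hθ => convex_setOf_posDef_inv_add_ppEval θ (h₁.2 θ hθ) (h₂.2 θ hθ) ha hb hab⟩

variable (R : ℤ → Matrix (Fin m) (Fin m) ℝ)

lemma convexOn_Jintegrand (θ : ℝ) :
    ConvexOn ℝ {C | ((Ψ θ)⁻¹ + ppEval n C θ).PosDef} (Jintegrand n Ψ R · θ) :=
  ⟨convex_setOf_posDef_inv_add_ppEval θ, fun C₁ h₁ C₂ h₂ a b ha hb hab => by
    have := strictConcaveOn_logdet.concaveOn.2 h₁ h₂ ha hb hab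
    simp only [smul_eq_mul] at this ⊢
    linarith [Jintegrand_smul_add_smul n Ψ R C₁ C₂ hab θ]⟩

lemma Jintegrand_smul_add_smul_lt {C₁ C₂ : ℤ → Matrix (Fin m) (Fin m) ℝ} {θ : ℝ}
    (h₁ : ((Ψ θ)⁻¹ + ppEval n C₁ θ).PosDef) (h₂ : ((Ψ θ)⁻¹ + ppEval n C₂ θ).PosDef)
    (hne : ppEval n C₁ θ ≠ ppEval n C₂ θ) {a b : ℝ} (ha : 0 < a) (hb : 0 < b) (hab : a + b = 1) :
    Jintegrand n Ψ R (a • C₁ + b • C₂) θ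
      < a * Jintegrand n Ψ R C₁ θ + b * Jintegrand n Ψ R C₂ θ := by
  have := strictConcaveOn_logdet.2 h₁ h₂ (fun h => hne (add_left_cancel h)) ha hb hab
  simp only [smul_eq_mul] at this
  linarith [Jintegrand_smul_add_smul n Ψ R C₁ C₂ hab θ]

theorem strictConvexOn_Jfun (hΨ : ContinuousOn Ψ (Set.Icc (-π) π))
    (hΨpd : ∀ θ ∈ Set.Icc (-π) π, (Ψ θ).PosDef) (Ωσ : Finset (Fin m × Fin m)) {lam : ℝ}
    (hlam : 0 ≤ lam) : StrictConvexOn ℝ (QPlus n Ψ) (Jfun n Ψ R Ωσ lam) := by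
  have hintegral : StrictConvexOn ℝ (QPlus n Ψ) fun C => ∫ θ in (-π)..π, Jintegrand n Ψ R C θ := by
    refine strictConvexOn_intervalIntegral convex_QPlus (by linarith [Real.pi_pos])
      (fun C hC => continuousOn_Jintegrand R hΨ (fun θ hθ => (hΨpd θ hθ).det_pos.ne') hC.2)
      (fun θ hθ => (convexOn_Jintegrand R θ).subset (fun C hC => hC.2 θ hθ) convex_QPlus)
      fun C₁ h₁ C₂ h₂ hne => ?_
    obtain ⟨θ, hθ, hθne⟩ : ∃ θ ∈ Set.Icc (-π) π, ppEval n C₁ θ ≠ ppEval n C₂ θ := by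
      by_contra! h
      exact hne (eq_of_eqOn_ppEval n h₁.1.2 h₂.1.2 h)
    exact ⟨θ, hθ, fun a b => Jintegrand_smul_add_smul_lt R (h₁.2 θ hθ) (h₂.2 θ hθ) hθne⟩
  refine ((hintegral.div_const (by positivity : (0 : ℝ) < 2 * π)).add_convexOn
    (((convexOn_hSig n Ωσ).subset (Set.subset_univ _) convex_QPlus).smul hlam)).congr ?_
  exact fun C _ => (Jfun_eq n Ψ R Ωσ lam C).symm

end StrictConvexity

theorem stmt8_general (m n : ℕ)
    (Ψ : ℝ → Matrix (Fin m) (Fin m) ℂ)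
    (hΨcont : ContinuousOn Ψ (Set.Icc (-π) π))
    (hΨpd : ∀ θ ∈ Set.Icc (-π) π, (Ψ θ).PosDef)
    (R : ℤ → Matrix (Fin m) (Fin m) ℝ)
    (Ωσ : Finset (Fin m × Fin m))
    (lam : ℝ) (hlam : 0 < lam)
    (C₁ C₂ : ℤ → Matrix (Fin m) (Fin m) ℝ)
    (hC₁ : IsPP m n C₁)
    (hC₁pos : ∀ θ ∈ Set.Icc (-π) π, ((Ψ θ)⁻¹ + ppEval n C₁ θ).PosDef)
    (hC₂ : IsPP m n C₂)
    (hC₂pos : ∀ θ ∈ Set.Icc (-π) π, ((Ψ θ)⁻¹ + ppEval n C₂ θ).PosDef)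
    (hne : C₁ ≠ C₂)
    (t : ℝ) (ht0 : 0 < t) (ht1 : t < 1) :
    (IsPP m n (fun k => t • C₁ k + (1 - t) • C₂ k) ∧
      ∀ θ ∈ Set.Icc (-π) π,
        ((Ψ θ)⁻¹ + ppEval n (fun k => t • C₁ k + (1 - t) • C₂ k) θ).PosDef) ∧
    Jfun n Ψ R Ωσ lam (fun k => t • C₁ k + (1 - t) • C₂ k)
      < t * Jfun n Ψ R Ωσ lam C₁ + (1 - t) * Jfun n Ψ R Ωσ lam C₂ := by
  have hJ : StrictConvexOn ℝ (QPlus n Ψ) (Jfun n Ψ R Ωσ lam) :=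
    strictConvexOn_Jfun R hΨcont hΨpd Ωσ hlam.le
  have h₁ : C₁ ∈ QPlus n Ψ := ⟨hC₁, hC₁pos⟩
  have h₂ : C₂ ∈ QPlus n Ψ := ⟨hC₂, hC₂pos⟩
  have h1t : 0 < 1 - t := sub_pos.mpr ht1
  exact ⟨hJ.1 h₁ h₂ ht0.le h1t.le (add_sub_cancel t 1), hJ.2 h₁ h₂ hne ht0 h1t (add_sub_cancel t 1)⟩

/-- The functional `J_Ψ` is strictly convex on `Q_Ψ^+`: for distinct
`Q₁, Q₂ ∈ Q_Ψ^+` and `t ∈ (0,1)`, the combination `tQ₁ + (1−t)Q₂` lies in `Q_Ψ^+` and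
`J_Ψ(tQ₁ + (1−t)Q₂) < t J_Ψ(Q₁) + (1−t) J_Ψ(Q₂)`. -/
theorem stmt8 (m n : ℕ) (hm : 1 ≤ m) (hn : 1 ≤ n)
    (Ψ : ℝ → Matrix (Fin m) (Fin m) ℂ)
    (hΨcont : ContinuousOn Ψ (Set.Icc (-π) π))
    (hΨpd : ∀ θ ∈ Set.Icc (-π) π, (Ψ θ).PosDef)
    (R : ℤ → Matrix (Fin m) (Fin m) ℝ)
    (hRsym : ∀ k : ℤ, R (-k) = (R k)ᵀ)
    (Ωσ : Finset (Fin m × Fin m))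
    (hΩsym : ∀ p ∈ Ωσ, (p.2, p.1) ∈ Ωσ)
    (hΩdiag : ∀ i : Fin m, (i, i) ∈ Ωσ)
    (lam : ℝ) (hlam : 0 < lam)
    (C₁ C₂ : ℤ → Matrix (Fin m) (Fin m) ℝ)
    (hC₁ : IsPP m n C₁)
    (hC₁pos : ∀ θ ∈ Set.Icc (-π) π, ((Ψ θ)⁻¹ + ppEval n C₁ θ).PosDef)
    (hC₂ : IsPP m n C₂)
    (hC₂pos : ∀ θ ∈ Set.Icc (-π) π, ((Ψ θ)⁻¹ + ppEval n C₂ θ).PosDef)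
    (hne : C₁ ≠ C₂)
    (t : ℝ) (ht0 : 0 < t) (ht1 : t < 1) :
    (IsPP m n (fun k => t • C₁ k + (1 - t) • C₂ k) ∧
      ∀ θ ∈ Set.Icc (-π) π,
        ((Ψ θ)⁻¹ + ppEval n (fun k => t • C₁ k + (1 - t) • C₂ k) θ).PosDef) ∧
    Jfun n Ψ R Ωσ lam (fun k => t • C₁ k + (1 - t) • C₂ k)
      < t * Jfun n Ψ R Ωσ lam C₁ + (1 - t) * Jfun n Ψ R Ωσ lam C₂ :=
  stmt8_general m n Ψ hΨcont hΨpd R Ωσ lam hlam C₁ C₂ hC₁ hC₁pos hC₂ hC₂pos hne t ht0 ht1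
end

section
/- Divergence of the trace of the inverse at the boundary: let M : [-π,π] → ℂ^{m×m} be a function whose entries are rational in e^{iθ} (each entry M_{ij}(θ) = p_{ij}(e^{iθ})/q_{ij}(e^{iθ}) for complex polynomials with q_{ij} nonvanishing on the unit circle), such that M(θ) is Hermitian positive semidefinite for every θ, M(θ_0) is singular for some θ_0 ∈ [-π,π], and det M(θ) is not identically zero. Then M(θ) is invertible for all but finitely many θ and ∫_{-π}^{π} tr(M(θ)^{-1}) dθ = +∞ (as a Lebesgue integral of the nonnegative function θ ↦ tr(M(θ)^{-1}), defined wherever M(θ) is invertible). -/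
/-!
Pick a null vector `v` of `M(θ₀)`. Cauchy–Schwarz for the semi-inner product `⟪x, y⟫ = x* M y`,
applied to `x = M⁻¹ eᵢ` and summed over `i`, gives `‖v‖² ≤ tr(M⁻¹) · v* M v` wherever `M` is
invertible. Since `θ ↦ v* M(θ) v` is `C¹` on `[-π, π]` and vanishes at `θ₀`, it is at most
`K |θ - θ₀|`, so `tr(M(θ)⁻¹) ≥ ‖v‖² / (K |θ - θ₀|)`, which is not integrable near `θ₀`.
Clearing denominators row by row writes `det M(θ)` as a nonvanishing factor times `D(e^{iθ})` for
a polynomial `D`, which is nonzero because `det M(θ₁) ≠ 0`; this gives finiteness of the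
singular set.
-/

open MeasureTheory Matrix Polynomial Set
open scoped Real ComplexOrder NNReal

namespace Matrix

variable {𝕜 n : Type*} [RCLike 𝕜] [Fintype n]

theorem PosSemidef.norm_sq_dotProduct_mulVec_le {A : Matrix n n 𝕜} (hA : A.PosSemidef)
    (x y : n → 𝕜) :
    ‖star x ⬝ᵥ (A *ᵥ y)‖ ^ 2 ≤
      RCLike.re (star x ⬝ᵥ (A *ᵥ x)) * RCLike.re (star y ⬝ᵥ (A *ᵥ y)) := by
  let := A.toSeminormedAddCommGroup hA
  let := A.toInnerProductSpace hA
  have hinner (u w : n → 𝕜) : inner 𝕜 u w = star u ⬝ᵥ (A *ᵥ w) := dotProduct_comm _ _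
  have h := inner_mul_inner_self_le (𝕜 := 𝕜) x y
  rw [norm_inner_symm y x, ← sq] at h
  simpa only [hinner] using h

theorem PosDef.re_dotProduct_le_re_trace_inv_mul [DecidableEq n] {A : Matrix n n 𝕜}
    (hA : A.PosDef) (v : n → 𝕜) :
    RCLike.re (star v ⬝ᵥ v) ≤ RCLike.re A⁻¹.trace * RCLike.re (star v ⬝ᵥ (A *ᵥ v)) := by
  have hdual (w y : n → 𝕜) : star (A⁻¹ *ᵥ w) ⬝ᵥ (A *ᵥ y) = star w ⬝ᵥ y := by
    rw [star_mulVec, dotProduct_mulVec, vecMul_vecMul, conjTranspose_nonsing_inv,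
      hA.isHermitian.eq, nonsing_inv_mul _ ((isUnit_iff_isUnit_det A).1 hA.isUnit), vecMul_one]
  have hcoord (i : n) :
      ‖v i‖ ^ 2 ≤ RCLike.re (A⁻¹ i i) * RCLike.re (star v ⬝ᵥ (A *ᵥ v)) := by
    have h := hA.posSemidef.norm_sq_dotProduct_mulVec_le (A⁻¹ *ᵥ Pi.single i 1) v
    rwa [hdual, hdual, Pi.star_single, star_one, single_one_dotProduct, single_one_dotProduct,
      mulVec_single_one, col_apply] at h
  calc RCLike.re (star v ⬝ᵥ v) = ∑ i, ‖v i‖ ^ 2 := by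
        simp only [dotProduct, Pi.star_apply, RCLike.star_def, RCLike.conj_mul, map_sum]
        norm_cast
    _ ≤ ∑ i, RCLike.re (A⁻¹ i i) * RCLike.re (star v ⬝ᵥ (A *ᵥ v)) :=
        Finset.sum_le_sum fun i _ => hcoord i
    _ = RCLike.re A⁻¹.trace * RCLike.re (star v ⬝ᵥ (A *ᵥ v)) := by
        rw [← Finset.sum_mul, trace, map_sum]
        rfl

end Matrix

theorem lintegral_enorm_inv_sub_eq_top {a b c : ℝ} (hab : a < b) (hc : c ∈ Icc a b) :
    ∫⁻ x in Icc a b, ‖(x - c)⁻¹‖ₑ = ⊤ := by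
  by_contra h
  have hint : IntegrableOn (fun x => (x - c)⁻¹) (Icc a b) :=
    ⟨(measurable_id.sub_const c).inv.aestronglyMeasurable, lt_top_iff_ne_top.2 h⟩
  have := (intervalIntegrable_iff_integrableOn_Icc_of_le hab.le).2 hint
  rw [intervalIntegrable_sub_inv_iff, uIcc_of_le hab.le] at this
  exact this.elim hab.ne (· hc)

theorem lintegral_ofReal_re_trace_inv_eq_top {𝕜 n : Type*} [RCLike 𝕜] [Fintype n]
    [DecidableEq n] {M : ℝ → Matrix n n 𝕜} {a b θ₀ : ℝ} (hab : a < b) (hθ₀ : θ₀ ∈ Icc a b)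
    (hpsd : ∀ θ ∈ Icc a b, (M θ).PosSemidef)
    (hdet : ∀ᵐ θ ∂volume.restrict (Icc a b), (M θ).det ≠ 0) {v : n → 𝕜} (hv : v ≠ 0)
    {K : ℝ≥0} (hK : ∀ θ ∈ Icc a b, RCLike.re (star v ⬝ᵥ (M θ *ᵥ v)) ≤ K * |θ - θ₀|) :
    ∫⁻ θ in Icc a b, ENNReal.ofReal (RCLike.re (M θ)⁻¹.trace) = ⊤ := by
  set c := RCLike.re (star v ⬝ᵥ v)
  have hc : 0 < c := (RCLike.pos_iff.1 (dotProduct_star_self_pos_iff.2 hv)).1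
  have hpoint : ∀ θ ∈ Icc a b, (M θ).det ≠ 0 →
      c * |θ - θ₀|⁻¹ ≤ K * RCLike.re (M θ)⁻¹.trace := by
    intro θ hθ hθdet
    have hPD := ((hpsd θ hθ).posDef_iff_det_ne_zero).2 hθdet
    have htr : 0 ≤ RCLike.re (M θ)⁻¹.trace :=
      (RCLike.nonneg_iff.1 hPD.posSemidef.inv.trace_nonneg).1
    rw [← div_eq_mul_inv]
    refine div_le_of_le_mul₀ (abs_nonneg _) (by positivity) ?_
    calc c ≤ RCLike.re (M θ)⁻¹.trace * RCLike.re (star v ⬝ᵥ (M θ *ᵥ v)) :=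
          hPD.re_dotProduct_le_re_trace_inv_mul v
      _ ≤ RCLike.re (M θ)⁻¹.trace * (K * |θ - θ₀|) := mul_le_mul_of_nonneg_left (hK θ hθ) htr
      _ = K * RCLike.re (M θ)⁻¹.trace * |θ - θ₀| := by ring
  have hlower : ∀ᵐ θ ∂volume.restrict (Icc a b), ENNReal.ofReal c * ‖(θ - θ₀)⁻¹‖ₑ ≤
      K * ENNReal.ofReal (RCLike.re (M θ)⁻¹.trace) := by
    filter_upwards [hdet, ae_restrict_mem measurableSet_Icc] with θ hθdet hθ
    rw [← ofReal_norm, norm_inv, Real.norm_eq_abs, ← ENNReal.ofReal_mul hc.le,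
      ← ENNReal.ofReal_coe_nnreal, ← ENNReal.ofReal_mul K.coe_nonneg]
    exact ENNReal.ofReal_le_ofReal (hpoint θ hθ hθdet)
  have htop : ⊤ ≤ (K : ENNReal) * ∫⁻ θ in Icc a b, ENNReal.ofReal (RCLike.re (M θ)⁻¹.trace) :=
    calc ⊤ = ENNReal.ofReal c * ∫⁻ θ in Icc a b, ‖(θ - θ₀)⁻¹‖ₑ := by
          rw [lintegral_enorm_inv_sub_eq_top hab hθ₀, ENNReal.mul_top (by simpa using hc)]
      _ = ∫⁻ θ in Icc a b, ENNReal.ofReal c * ‖(θ - θ₀)⁻¹‖ₑ :=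
          (lintegral_const_mul' _ _ ENNReal.ofReal_ne_top).symm
      _ ≤ ∫⁻ θ in Icc a b, K * ENNReal.ofReal (RCLike.re (M θ)⁻¹.trace) :=
          lintegral_mono_ae hlower
      _ = _ := lintegral_const_mul' _ _ ENNReal.coe_ne_top
  by_contra h
  exact ENNReal.mul_ne_top ENNReal.coe_ne_top h (top_le_iff.1 htop)

theorem exists_norm_dotProduct_mulVec_le {𝕜 n : Type*} [RCLike 𝕜] [Fintype n]
    {M : ℝ → Matrix n n 𝕜} {s : Set ℝ} (hs : Convex ℝ s) (hs' : IsCompact s)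
    (hM : ∀ i j, ContDiffOn ℝ 1 (fun θ => M θ i j) s) {θ₀ : ℝ} (hθ₀ : θ₀ ∈ s) {v : n → 𝕜}
    (hv : M θ₀ *ᵥ v = 0) :
    ∃ K : ℝ≥0, ∀ θ ∈ s, ‖star v ⬝ᵥ (M θ *ᵥ v)‖ ≤ K * |θ - θ₀| := by
  have hf : ContDiffOn ℝ 1 (fun θ => star v ⬝ᵥ (M θ *ᵥ v)) s := by
    simp only [dotProduct, mulVec]
    exact ContDiffOn.sum fun i _ => contDiffOn_const.mul <|
      ContDiffOn.sum fun j _ => (hM i j).mul contDiffOn_const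
  obtain ⟨K, hK⟩ := hf.exists_lipschitzOnWith one_ne_zero hs hs'
  refine ⟨K, fun θ hθ => ?_⟩
  simpa [hv, ← Real.dist_eq] using hK.dist_le_mul θ hθ θ₀ hθ₀

theorem contDiffOn_eval_exp_I_mul_div (p q : ℂ[X]) {s : Set ℝ}
    (hq : ∀ θ ∈ s, q.eval (Complex.exp (Complex.I * θ)) ≠ 0) :
    ContDiffOn ℝ 1 (fun θ : ℝ => p.eval (Complex.exp (Complex.I * θ))
      / q.eval (Complex.exp (Complex.I * θ))) s := by
  have hexp : ContDiff ℝ 1 fun θ : ℝ => Complex.exp (Complex.I * θ) :=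
    Complex.contDiff_exp.comp (contDiff_const.mul Complex.ofRealCLM.contDiff)
  have heval (r : ℂ[X]) : ContDiff ℝ 1 fun θ : ℝ => r.eval (Complex.exp (Complex.I * θ)) := by
    simpa only [coe_aeval_eq_eval, Function.comp_def] using
      ((r.contDiff_aeval (𝕜 := ℂ) 1).restrict_scalars ℝ).comp hexp
  exact ((heval p).contDiffOn.mul ((heval q).contDiffOn.inv hq)).congr fun θ _ =>
    div_eq_mul_inv _ _

theorem finite_setOf_exp_I_mul_mem {S : Set ℂ} (hS : S.Finite) :
    {θ ∈ Icc (-π) π | Complex.exp (Complex.I * θ) ∈ S}.Finite := by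
  have hexp (θ : ℝ) : Complex.exp (Complex.I * θ) = Circle.exp θ := by
    rw [Circle.coe_exp, mul_comm]
  have hinj : InjOn (fun θ : ℝ => Complex.exp (Complex.I * θ)) (Ioc (-π) π) := by
    simp only [hexp]
    exact Subtype.val_injective.comp_injOn (Circle.exp_injOn_Ioc (by linarith))
  have hIoc : {θ ∈ Ioc (-π) π | Complex.exp (Complex.I * θ) ∈ S}.Finite :=
    Finite.of_finite_image (hS.subset (image_subset_iff.2 fun θ hθ => hθ.2))
      (hinj.mono fun θ hθ => hθ.1)
  refine (hIoc.insert (-π)).subset fun θ ⟨hθ, hθS⟩ => ?_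
  rcases hθ.1.eq_or_lt with h | h
  · exact .inl h.symm
  · exact .inr ⟨⟨h, hθ.2⟩, hθS⟩

theorem Matrix.exists_polynomial_det_eq_zero_iff {K ι : Type*} [Field K] [Fintype ι] [DecidableEq ι]
    (p q : ι → ι → K[X]) :
    ∃ D : K[X], ∀ z : K, (∀ i j, (q i j).eval z ≠ 0) →
      ((of fun i j => (p i j).eval z / (q i j).eval z).det = 0 ↔ D.IsRoot z) := by
  refine ⟨(of fun i j => p i j * ∏ k ∈ Finset.univ.erase j, q i k).det, fun z hz => ?_⟩
  have hrow (i j : ι) : (p i j * ∏ k ∈ Finset.univ.erase j, q i k).eval z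
      = (∏ k, (q i k).eval z) * ((p i j).eval z / (q i j).eval z) := by
    rw [eval_mul, eval_prod, ← Finset.mul_prod_erase _ _ (Finset.mem_univ j)]
    field_simp [hz i j]
  have hD : (of fun i j => p i j * ∏ k ∈ Finset.univ.erase j, q i k).det.eval z
      = (∏ i, ∏ k, (q i k).eval z) * (of fun i j => (p i j).eval z / (q i j).eval z).det := by
    rw [← coe_evalRingHom, RingHom.map_det, ← det_mul_column]
    congr 1
    ext i j
    exact hrow i j
  rw [IsRoot.def, hD, mul_eq_zero, or_iff_right]
  exact Finset.prod_ne_zero_iff.2 fun i _ => Finset.prod_ne_zero_iff.2 fun k _ => hz i k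

theorem finite_setOf_det_eq_zero_of_eq_div {ι : Type*} [Fintype ι] [DecidableEq ι]
    {M : ℝ → Matrix ι ι ℂ} (p q : ι → ι → ℂ[X])
    (hq : ∀ i j, ∀ θ ∈ Icc (-π) π, (q i j).eval (Complex.exp (Complex.I * θ)) ≠ 0)
    (hpq : ∀ i j, ∀ θ ∈ Icc (-π) π, M θ i j =
      (p i j).eval (Complex.exp (Complex.I * θ)) / (q i j).eval (Complex.exp (Complex.I * θ)))
    (hM : ∃ θ₁ ∈ Icc (-π) π, (M θ₁).det ≠ 0) :
    {θ ∈ Icc (-π) π | (M θ).det = 0}.Finite := by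
  obtain ⟨D, hD⟩ := Matrix.exists_polynomial_det_eq_zero_iff p q
  have hdet : ∀ θ ∈ Icc (-π) π, (M θ).det = 0 ↔ D.IsRoot (Complex.exp (Complex.I * θ)) := by
    intro θ hθ
    have hMθ : M θ = of fun i j => (p i j).eval (Complex.exp (Complex.I * θ))
        / (q i j).eval (Complex.exp (Complex.I * θ)) := ext fun i j => hpq i j θ hθ
    rw [hMθ, hD _ fun i j => hq i j θ hθ]
  have hD0 : D ≠ 0 := by
    rintro rfl
    obtain ⟨θ₁, hθ₁, hdet₁⟩ := hM
    exact hdet₁ ((hdet θ₁ hθ₁).2 (eval_zero))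
  exact (finite_setOf_exp_I_mul_mem (finite_setOfPred_isRoot hD0)).subset
    fun θ ⟨hθ, hθdet⟩ => ⟨hθ, (hdet θ hθ).1 hθdet⟩

theorem stmt10_general (m : ℕ)
    (M : ℝ → Matrix (Fin m) (Fin m) ℂ)
    (hrat : ∀ i j : Fin m, ∃ p q : Polynomial ℂ,
      (∀ θ ∈ Set.Icc (-π) π, q.eval (Complex.exp (Complex.I * (θ : ℂ))) ≠ 0) ∧
      ∀ θ ∈ Set.Icc (-π) π,
        M θ i j = p.eval (Complex.exp (Complex.I * (θ : ℂ)))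
          / q.eval (Complex.exp (Complex.I * (θ : ℂ))))
    (hpsd : ∀ θ ∈ Set.Icc (-π) π, (M θ).PosSemidef)
    (hsing : ∃ θ₀ ∈ Set.Icc (-π) π, (M θ₀).det = 0)
    (hnotzero : ∃ θ₁ ∈ Set.Icc (-π) π, (M θ₁).det ≠ 0) :
    {θ ∈ Set.Icc (-π) π | (M θ).det = 0}.Finite ∧
    ∫⁻ θ in Set.Icc (-π) π, ENNReal.ofReal (((M θ)⁻¹).trace.re) = ⊤ := by
  choose p q hq hpq using hrat
  have hfin := finite_setOf_det_eq_zero_of_eq_div p q hq hpq hnotzero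
  refine ⟨hfin, ?_⟩
  obtain ⟨θ₀, hθ₀, hdet₀⟩ := hsing
  obtain ⟨v, hv, hMv⟩ := exists_mulVec_eq_zero_iff.2 hdet₀
  obtain ⟨K, hK⟩ := exists_norm_dotProduct_mulVec_le (convex_Icc _ _) isCompact_Icc
    (fun i j => (contDiffOn_eval_exp_I_mul_div (p i j) (q i j) (hq i j)).congr (hpq i j))
    hθ₀ hMv
  have hdet : ∀ᵐ θ ∂volume.restrict (Icc (-π) π), (M θ).det ≠ 0 := by
    filter_upwards [measure_eq_zero_iff_ae_notMem.1 (hfin.measure_zero _),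
      ae_restrict_mem measurableSet_Icc] with θ hθB hθ hθdet
    exact hθB ⟨hθ, hθdet⟩
  exact lintegral_ofReal_re_trace_inv_eq_top (by linarith [Real.pi_pos]) hθ₀ hpsd hdet hv
    fun θ hθ => (RCLike.re_le_norm _).trans (hK θ hθ)

/-- Divergence of the trace of the inverse at the boundary: if
`M : [-π,π] → ℂ^{m×m}` has entries rational in `e^{iθ}`, is Hermitian positive
semidefinite everywhere, is singular at some point, and `det M` is not identically zero,
then `M(θ)` is invertible for all but finitely many `θ ∈ [-π,π]` and
`∫ tr(M(θ)⁻¹) dθ = +∞`. -/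
theorem stmt10 (m : ℕ) (hm : 1 ≤ m)
    (M : ℝ → Matrix (Fin m) (Fin m) ℂ)
    (hrat : ∀ i j : Fin m, ∃ p q : Polynomial ℂ,
      (∀ θ ∈ Set.Icc (-π) π, q.eval (Complex.exp (Complex.I * (θ : ℂ))) ≠ 0) ∧
      ∀ θ ∈ Set.Icc (-π) π,
        M θ i j = p.eval (Complex.exp (Complex.I * (θ : ℂ)))
          / q.eval (Complex.exp (Complex.I * (θ : ℂ))))
    (hpsd : ∀ θ ∈ Set.Icc (-π) π, (M θ).PosSemidef)
    (hsing : ∃ θ₀ ∈ Set.Icc (-π) π, (M θ₀).det = 0)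
    (hnotzero : ∃ θ₁ ∈ Set.Icc (-π) π, (M θ₁).det ≠ 0) :
    {θ ∈ Set.Icc (-π) π | (M θ).det = 0}.Finite ∧
    ∫⁻ θ in Set.Icc (-π) π, ENNReal.ofReal (((M θ)⁻¹).trace.re) = ⊤ :=
  stmt10_general m M hrat hpsd hsing hnotzero
end

section
/- A nonnegative rational trigonometric function with a zero has non-integrable reciprocal: let p, q be complex polynomials with q(e^{iθ}) ≠ 0 for all θ ∈ [-π,π], and set r(θ) = p(e^{iθ})/q(e^{iθ}). Assume r(θ) is real and r(θ) ≥ 0 for every θ, r(θ_0) = 0 for some θ_0 ∈ [-π,π], and r is not identically zero. Then ∫_{-π}^{π} 1/r(θ) dθ = +∞ (as a Lebesgue integral of the nonnegative function 1/r over the set where r(θ) > 0). -/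
open MeasureTheory Set Complex
open scoped Real

/-!
If `r(θ₀) = 0` then `p` has the root `z₀ = e^{iθ₀}`, so `p = (X - z₀) p₁` and, since `q` is
bounded away from zero on the compact `[-π, π]` and `θ ↦ e^{iθ}` is 1-Lipschitz,
`0 ≤ r(θ) ≤ K |θ - θ₀|` there. Off the countable set where `p(e^{iθ})` vanishes, `r(θ) > 0`,
hence `1/r(θ) ≥ K⁻¹ |θ - θ₀|⁻¹` almost everywhere, and `|θ - θ₀|⁻¹` is not integrable.
A zero of first order already suffices.
-/

lemma lintegral_ofReal_inv_abs_sub_eq_top {a b c : ℝ} (hab : a < b) (hc : c ∈ Icc a b) :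
    ∫⁻ x in Icc a b, ENNReal.ofReal |x - c|⁻¹ = ⊤ := by
  by_contra hfin
  have hint : IntegrableOn (fun x => (x - c)⁻¹) (uIcc a b) := by
    refine ⟨(measurable_id.sub_const c).inv.aestronglyMeasurable, (hasFiniteIntegral_iff_norm _).2 ?_⟩
    simpa [uIcc_of_le hab.le, lt_top_iff_ne_top] using hfin
  rcases intervalIntegrable_sub_inv_iff.1 hint.intervalIntegrable with h | h
  · exact hab.ne h
  · exact h (Icc_subset_uIcc hc)

lemma countable_setOf_exp_I_mul_eq (z : ℂ) : {θ : ℝ | exp (I * θ) = z}.Countable := by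
  rcases eq_empty_or_nonempty {θ : ℝ | exp (I * θ) = z} with h | ⟨φ, hφ⟩
  · simp [h]
  refine (countable_range fun n : ℤ => φ + n * (2 * π)).mono fun θ hθ => ?_
  obtain ⟨n, hn⟩ := exp_eq_exp_iff_exists_int.1 (hθ.trans hφ.symm)
  refine ⟨n, ofReal_injective (mul_left_cancel₀ I_ne_zero ?_)⟩
  push_cast
  linear_combination -hn

lemma Polynomial.countable_setOf_eval_exp_I_mul_eq_zero {p : Polynomial ℂ} (hp : p ≠ 0) :
    {θ : ℝ | p.eval (exp (I * θ)) = 0}.Countable :=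
  ((p.finite_setOfPred_isRoot hp).countable.biUnion fun z _ => countable_setOf_exp_I_mul_eq z).mono
    fun θ hθ => mem_biUnion (x := exp (I * θ)) hθ rfl

lemma norm_exp_I_mul_sub_exp_I_mul_le (θ φ : ℝ) : ‖exp (I * θ) - exp (I * φ)‖ ≤ |θ - φ| := by
  have : exp (I * θ) - exp (I * φ) = exp (I * φ) * (exp (I * ↑(θ - φ)) - 1) := by
    rw [mul_sub, ← exp_add]; push_cast; ring_nf
  rw [this, norm_mul, norm_exp_I_mul_ofReal, one_mul]
  exact Real.norm_exp_I_mul_ofReal_sub_one_le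

lemma Polynomial.exists_norm_eval_exp_I_mul_div_le {p q : Polynomial ℂ} {s : Set ℝ}
    (hs : IsCompact s) (hq : ∀ θ ∈ s, q.eval (exp (I * θ)) ≠ 0) {θ₀ : ℝ}
    (hp : p.eval (exp (I * θ₀)) = 0) :
    ∃ K > 0, ∀ θ ∈ s, ‖p.eval (exp (I * θ)) / q.eval (exp (I * θ))‖ ≤ K * |θ - θ₀| := by
  set p₁ := p /ₘ (X - C (exp (I * θ₀)))
  have hfactor : (X - C (exp (I * θ₀))) * p₁ = p := mul_divByMonic_eq_iff_isRoot.2 hp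
  have hcont : Continuous fun θ : ℝ => exp (I * θ) := by fun_prop
  obtain ⟨B, hB⟩ := hs.exists_bound_of_continuousOn
    ((p₁.continuous.comp hcont).continuousOn.div (q.continuous.comp hcont).continuousOn hq)
  refine ⟨max B 1, by positivity, fun θ hθ => ?_⟩
  calc ‖p.eval (exp (I * θ)) / q.eval (exp (I * θ))‖
      = ‖exp (I * θ) - exp (I * θ₀)‖ * ‖p₁.eval (exp (I * θ)) / q.eval (exp (I * θ))‖ := by
        rw [← hfactor, eval_mul, mul_div_assoc, norm_mul]; simp
    _ ≤ |θ - θ₀| * max B 1 :=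
        mul_le_mul (norm_exp_I_mul_sub_exp_I_mul_le θ θ₀) ((hB θ hθ).trans (le_max_left _ _))
          (norm_nonneg _) (abs_nonneg _)
    _ = max B 1 * |θ - θ₀| := mul_comm _ _

/-- A nonnegative rational trigonometric function with a zero has
non-integrable reciprocal: if `r(θ) = p(e^{iθ})/q(e^{iθ})` is real and nonnegative on
`[-π,π]`, vanishes at some point, and is not identically zero, then
`∫ 1/r(θ) dθ = +∞`. -/
theorem stmt11 (p q : Polynomial ℂ)
    (hq : ∀ θ ∈ Set.Icc (-π) π, q.eval (Complex.exp (Complex.I * (θ : ℂ))) ≠ 0)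
    (r : ℝ → ℂ)
    (hr : ∀ θ ∈ Set.Icc (-π) π,
      r θ = p.eval (Complex.exp (Complex.I * (θ : ℂ)))
        / q.eval (Complex.exp (Complex.I * (θ : ℂ))))
    (hreal : ∀ θ ∈ Set.Icc (-π) π, (r θ).im = 0)
    (hnonneg : ∀ θ ∈ Set.Icc (-π) π, 0 ≤ (r θ).re)
    (hzero : ∃ θ₀ ∈ Set.Icc (-π) π, r θ₀ = 0)
    (hnotzero : ∃ θ₁ ∈ Set.Icc (-π) π, r θ₁ ≠ 0) :
    ∫⁻ θ in Set.Icc (-π) π, ENNReal.ofReal (1 / (r θ).re) = ⊤ := by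
  obtain ⟨θ₀, hθ₀, hr₀⟩ := hzero
  have hp₀ : p.eval (exp (I * θ₀)) = 0 := by
    simpa [hr θ₀ hθ₀, hq θ₀ hθ₀] using hr₀
  have hp : p ≠ 0 := by
    rintro rfl
    obtain ⟨θ₁, hθ₁, hr₁⟩ := hnotzero
    simp [hr θ₁ hθ₁] at hr₁
  obtain ⟨K, hK, hbound⟩ := Polynomial.exists_norm_eval_exp_I_mul_div_le isCompact_Icc hq hp₀
  have hlower : ∀ᵐ θ ∂volume.restrict (Icc (-π) π),
      ENNReal.ofReal K⁻¹ * ENNReal.ofReal |θ - θ₀|⁻¹ ≤ ENNReal.ofReal (1 / (r θ).re) := by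
    filter_upwards [ae_restrict_mem measurableSet_Icc,
      (p.countable_setOf_eval_exp_I_mul_eq_zero hp).ae_notMem _] with θ hθ hθp
    have hre : (r θ).re = ‖r θ‖ := by
      rw [← abs_re_eq_norm.2 (hreal θ hθ), abs_of_nonneg (hnonneg θ hθ)]
    have hpos : 0 < ‖r θ‖ := by
      simpa [hr θ hθ, hq θ hθ] using hθp
    rw [← ENNReal.ofReal_mul (by positivity), ← mul_inv, hre, one_div]
    exact ENNReal.ofReal_le_ofReal (inv_anti₀ hpos (hr θ hθ ▸ hbound θ hθ))
  refine top_le_iff.1 ?_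
  calc ⊤ = ∫⁻ θ in Icc (-π) π, ENNReal.ofReal K⁻¹ * ENNReal.ofReal |θ - θ₀|⁻¹ := by
        rw [lintegral_const_mul' _ _ ENNReal.ofReal_ne_top,
          lintegral_ofReal_inv_abs_sub_eq_top (by linarith [Real.pi_pos]) hθ₀,
          ENNReal.mul_top (by simpa using hK)]
    _ ≤ ∫⁻ θ in Icc (-π) π, ENNReal.ofReal (1 / (r θ).re) := lintegral_mono_ae hlower
end
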